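/- arXiv:2304.01286 — 3 statements merged into one kernel-verified Lean document; each statement's English description precedes it below -/
import Mathlib

section
/- A play ρ of the arena G is secret-revealing winning (i.e., L(ρ) is accepted by the DFA and every observation-equivalent play ρ' ∈ [ρ] also has L(ρ') accepted) if and only if the final belief b_n of the corresponding belief-augmented play satisfies b_n ⊆ S × F. -/
/-- A finite play of the arena `G` from initial state `s0`:
`n` is the length, `s i` the states, `a i` the actions. -/
structure Play (S A : Type) (T : S → A → S) (s0 : S) where
  n : ℕ
  s : ℕ → S
  a : ℕ → A
  h0 : s 0 = s0
  hstep : ∀ i < n, s (i + 1) = T (s i) (a i)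

/-- Belief update: given belief `b` and observation `o`, the next belief. -/
def beliefUpdate {S A Q Ω Γ : Type} (T : S → A → S) (δ : Q → Γ → Q)
    (L : S → Γ) (O : S → A → S → Ω) (b : Set (S × Q)) (o : Ω) : Set (S × Q) :=
  {p | ∃ sq ∈ b, ∃ abar : A, O sq.1 abar p.1 = o ∧ T sq.1 abar = p.1 ∧ δ sq.2 (L p.1) = p.2}

/-- The DFA state reached by tracing the labels of the play. -/
def qseq {S A Q Γ : Type} {T : S → A → S} {s0 : S}
    (δ : Q → Γ → Q) (L : S → Γ) (ι : Q) (ρ : Play S A T s0) : ℕ → Q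
  | 0 => δ ι (L (ρ.s 0))
  | i + 1 => δ (qseq δ L ι ρ i) (L (ρ.s (i + 1)))

/-- The attacker's belief sequence along the play. -/
def bseq {S A Q Ω Γ : Type} {s0 : S} (T : S → A → S) (δ : Q → Γ → Q)
    (L : S → Γ) (O : S → A → S → Ω) (ι : Q) (ρ : Play S A T s0) : ℕ → Set (S × Q)
  | 0 => {(ρ.s 0, δ ι (L (ρ.s 0)))}
  | i + 1 => beliefUpdate T δ L O (bseq T δ L O ι ρ i) (O (ρ.s i) (ρ.a i) (ρ.s (i + 1)))

/-- Two plays are observation-equivalent iff they have the same length and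
produce the same observation sequence. -/
def obsEquiv {S A Ω : Type} {T : S → A → S} {s0 : S} (O : S → A → S → Ω)
    (ρ ρ' : Play S A T s0) : Prop :=
  ρ.n = ρ'.n ∧ ∀ i < ρ.n, O (ρ.s i) (ρ.a i) (ρ.s (i + 1)) = O (ρ'.s i) (ρ'.a i) (ρ'.s (i + 1))

/-- A play is winning (accepted) iff the DFA state reached on its labels is accepting. -/
def accepted {S A Q Γ : Type} {T : S → A → S} {s0 : S}
    (δ : Q → Γ → Q) (L : S → Γ) (ι : Q) (F : Set Q) (ρ : Play S A T s0) : Prop :=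
  qseq δ L ι ρ ρ.n ∈ F

/-!
The belief after `i` steps is exactly the set of pairs `(ρ'.s i, q)` where `ρ'` ranges over the
plays of length `i` whose observations agree with those of `ρ`, and `q` is the DFA state reached
along `ρ'`. Hence the final belief lies in `S × F` iff every play observation-equivalent to `ρ`
(including `ρ` itself) is accepted.
-/

namespace Play

variable {S A Ω : Type} {T : S → A → S} {s0 : S}

def obs (O : S → A → S → Ω) (ρ : Play S A T s0) (i : ℕ) : Ω :=
  O (ρ.s i) (ρ.a i) (ρ.s (i + 1))

def snoc (ρ : Play S A T s0) (b : A) : Play S A T s0 where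
  n := ρ.n + 1
  s i := if i ≤ ρ.n then ρ.s i else T (ρ.s ρ.n) b
  a i := if i < ρ.n then ρ.a i else b
  h0 := by simp [ρ.h0]
  hstep i hi := by
    rcases Nat.lt_succ_iff_lt_or_eq.mp hi with hi | rfl
    · simp [hi, Nat.le_of_lt hi, Nat.succ_le_of_lt hi, ρ.hstep i hi]
    · simp

theorem snoc_s_of_le (ρ : Play S A T s0) (b : A) {i : ℕ} (hi : i ≤ ρ.n) :
    (ρ.snoc b).s i = ρ.s i := if_pos hi

theorem snoc_s_succ (ρ : Play S A T s0) (b : A) :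
    (ρ.snoc b).s (ρ.n + 1) = T (ρ.s ρ.n) b := if_neg (by omega)

theorem snoc_obs_of_lt (O : S → A → S → Ω) (ρ : Play S A T s0) (b : A) {i : ℕ} (hi : i < ρ.n) :
    (ρ.snoc b).obs O i = ρ.obs O i := by
  simp [obs, snoc, hi, Nat.le_of_lt hi, Nat.succ_le_of_lt hi]

theorem snoc_obs_self (O : S → A → S → Ω) (ρ : Play S A T s0) (b : A) :
    (ρ.snoc b).obs O ρ.n = O (ρ.s ρ.n) b (T (ρ.s ρ.n) b) := by
  simp [obs, snoc]

end Play

section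

variable {S A Q Ω Γ : Type} {T : S → A → S} {s0 : S}
  (δ : Q → Γ → Q) (L : S → Γ) (ι : Q)

theorem qseq_congr {ρ ρ' : Play S A T s0} :
    ∀ i, (∀ j ≤ i, ρ.s j = ρ'.s j) → qseq δ L ι ρ i = qseq δ L ι ρ' i
  | 0, h => by rw [qseq, qseq, h 0 le_rfl]
  | i + 1, h => by
    rw [qseq, qseq, h (i + 1) le_rfl, qseq_congr i fun j hj => h j (Nat.le_succ_of_le hj)]

theorem qseq_snoc_of_le (ρ : Play S A T s0) (b : A) {i : ℕ} (hi : i ≤ ρ.n) :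
    qseq δ L ι (ρ.snoc b) i = qseq δ L ι ρ i :=
  qseq_congr δ L ι i fun _ hj => ρ.snoc_s_of_le b (hj.trans hi)

theorem qseq_snoc_succ (ρ : Play S A T s0) (b : A) :
    qseq δ L ι (ρ.snoc b) (ρ.n + 1) = δ (qseq δ L ι ρ ρ.n) (L (T (ρ.s ρ.n) b)) := by
  rw [qseq, qseq_snoc_of_le δ L ι ρ b le_rfl, Play.snoc_s_succ]

variable (T) (O : S → A → S → Ω)

theorem mem_bseq_of_obs_eq (ρ ρ' : Play S A T s0) :
    ∀ i ≤ ρ'.n, (∀ j < i, ρ.obs O j = ρ'.obs O j) →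
      (ρ'.s i, qseq δ L ι ρ' i) ∈ bseq T δ L O ι ρ i
  | 0, _, _ => by simp [bseq, qseq, ρ.h0, ρ'.h0]
  | i + 1, hi, hobs =>
    ⟨_, mem_bseq_of_obs_eq ρ ρ' i (Nat.le_of_succ_le hi) fun j hj => hobs j (Nat.lt_succ_of_lt hj),
      ρ'.a i, (hobs i (Nat.lt_succ_self i)).symm, (ρ'.hstep i hi).symm, rfl⟩

theorem exists_play_of_mem_bseq (ρ : Play S A T s0) :
    ∀ i, ∀ p ∈ bseq T δ L O ι ρ i, ∃ ρ' : Play S A T s0,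
      ρ'.n = i ∧ (∀ j < i, ρ.obs O j = ρ'.obs O j) ∧ (ρ'.s i, qseq δ L ι ρ' i) = p
  | 0, p, hp => ⟨⟨0, fun _ => s0, fun _ => ρ.a 0, rfl, by simp⟩, rfl, by simp, by
      rw [bseq, Set.mem_singleton_iff] at hp
      simp [hp, qseq, ρ.h0]⟩
  | i + 1, p, ⟨sq, hsq, b, hobs_b, hT, hδ⟩ => by
    obtain ⟨ρ', rfl, hobs, rfl⟩ := exists_play_of_mem_bseq ρ i sq hsq
    refine ⟨ρ'.snoc b, rfl, fun j hj => ?_, ?_⟩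
    · rcases Nat.lt_succ_iff_lt_or_eq.mp hj with hj | rfl
      · rw [Play.snoc_obs_of_lt O ρ' b hj, hobs j hj]
      · rw [Play.snoc_obs_self, hT]
        exact hobs_b.symm
    · rw [qseq_snoc_succ, Play.snoc_s_succ, hT, hδ]

end

theorem obsEquiv_refl {S A Ω : Type} {T : S → A → S} {s0 : S} (O : S → A → S → Ω)
    (ρ : Play S A T s0) : obsEquiv O ρ ρ :=
  ⟨rfl, fun _ _ => rfl⟩

theorem revealing_winning_iff_belief_general
    {S A Q Ω Γ : Type} (T : S → A → S) (δ : Q → Γ → Q) (L : S → Γ)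
    (O : S → A → S → Ω) (ι : Q) (F : Set Q) (s0 : S)
    (ρ : Play S A T s0) :
    (accepted δ L ι F ρ ∧
      ∀ ρ' : Play S A T s0, obsEquiv O ρ ρ' → accepted δ L ι F ρ') ↔
    (∀ p ∈ bseq T δ L O ι ρ ρ.n, p.2 ∈ F) := by
  constructor
  · rintro ⟨-, hall⟩ p hp
    obtain ⟨ρ', hn, hobs, rfl⟩ := exists_play_of_mem_bseq T δ L ι O ρ ρ.n p hp
    have hacc : accepted δ L ι F ρ' := hall ρ' ⟨hn.symm, hobs⟩
    rwa [accepted, hn] at hacc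
  · intro hbelief
    have hall : ∀ ρ', obsEquiv O ρ ρ' → accepted δ L ι F ρ' := fun ρ' ⟨hn, hobs⟩ => by
      rw [accepted, ← hn]
      exact hbelief _ (mem_bseq_of_obs_eq T δ L ι O ρ ρ' ρ.n hn.le hobs)
    exact ⟨hall ρ (obsEquiv_refl O ρ), hall⟩

/-- a play is secret-revealing winning (accepted, and every
observation-equivalent play is accepted) iff its final belief is
contained in `S × F`. -/
theorem revealing_winning_iff_belief
    {S A Q Ω Γ : Type} (T : S → A → S) (δ : Q → Γ → Q) (L : S → Γ)
    (O : S → A → S → Ω) (ι : Q) (F : Set Q) (s0 : S)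
    (habs : ∀ q ∈ F, ∀ σ : Γ, δ q σ = q)
    (ρ : Play S A T s0) :
    (accepted δ L ι F ρ ∧
      ∀ ρ' : Play S A T s0, obsEquiv O ρ ρ' → accepted δ L ι F ρ') ↔
    (∀ p ∈ bseq T δ L O ι ρ ρ.n, p.2 ∈ F) :=
  revealing_winning_iff_belief_general T δ L O ι F s0 ρ
end

section
/- Let Win_1 be Player 1's sure-winning region in the belief-augmented game for reaching 𝓕 = S × F × 2^(S×Q), and Win_1^opaque the sure-winning region for reaching 𝓕_O = {(s,q,b) : q ∈ F, b ∩ (S × (Q \ F)) ≠ ∅}. Then for any state v ∈ Win_1 \ Win_1^opaque, for every Player-1 strategy π_1 that sure-wins the reachability objective ◊𝓕 from v, there exists a Player-2 strategy (namely, any strategy keeping the play outside Win_1^opaque) such that every resulting play reaches a state (s_k, q_k, b_k) with b_k ⊆ S × F; that is, the secret is surely revealed when satisfied. -/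
/-- The deterministic transition function of the belief-augmented game on
states `(s, q, b) : S × Q × Set (S × Q)`. -/
def Δb {S A Q Ω Γ : Type} (T : S → A → S) (δ : Q → Γ → Q) (L : S → Γ)
    (O : S → A → S → Ω) (v : S × Q × Set (S × Q)) (α : A) : S × Q × Set (S × Q) :=
  (T v.1 α, δ v.2.1 (L (T v.1 α)), beliefUpdate T δ L O v.2.2 (O v.1 α (T v.1 α)))

/-- The target set `𝓕_O` of opaque-winning states: `q ∈ F` and the belief
intersects `S × (Q \ F)`. -/
def FO {S Q : Type} (F : Set Q) : Set (S × Q × Set (S × Q)) :=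
  {v | v.2.1 ∈ F ∧ ∃ p ∈ v.2.2, p.2 ∉ F}

/-- The target set `𝓕 = S × F × 2^(S×Q)` of winning states. -/
def Fwin {S Q : Type} (F : Set Q) : Set (S × Q × Set (S × Q)) :=
  {v | v.2.1 ∈ F}

/-- The history of actions taken before step `i`. -/
def hist {A : Type} (a : ℕ → A) (i : ℕ) : List A :=
  List.ofFn (fun j : Fin i => a j.1)

/-- An infinite play `(vs, a)` of the belief-augmented game from `v`,
consistent with P1's strategy `π1` (used on P1's turns, `turn = true`) and
P2's strategy `π2` (used on P2's turns).  Since the game is deterministic,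
a history from a fixed start is identified with its action sequence. -/
def ConsistentV {S A Q Ω Γ : Type} (turn : S → Bool) (T : S → A → S)
    (δ : Q → Γ → Q) (L : S → Γ) (O : S → A → S → Ω)
    (π1 π2 : List A → A) (v : S × Q × Set (S × Q))
    (vs : ℕ → S × Q × Set (S × Q)) (a : ℕ → A) : Prop :=
  vs 0 = v ∧ (∀ i, vs (i + 1) = Δb T δ L O (vs i) (a i)) ∧
  (∀ i, turn (vs i).1 = true → a i = π1 (hist a i)) ∧
  (∀ i, turn (vs i).1 = false → a i = π2 (hist a i))

/-!
The game is deterministic, so a pair of strategies determines a single play. Since `v` lies outside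
`Win₁^opaque`, Player 2 has an answer `π₂` to `π₁` whose play never enters `𝓕_O`. As `π₁` forces `𝓕`,
this play reaches a state with `q ∈ F`, and since that state is not in `𝓕_O`, its belief lies in `S × F`.
-/

theorem hist_congr {A : Type} {a a' : ℕ → A} {i : ℕ} (h : ∀ j < i, a j = a' j) :
    hist a i = hist a' i := by
  unfold hist
  congr 1
  funext j
  exact h j.1 j.2

theorem ConsistentV.unique {S A Q Ω Γ : Type} {turn : S → Bool} {T : S → A → S}
    {δ : Q → Γ → Q} {L : S → Γ} {O : S → A → S → Ω} {π1 π2 : List A → A}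
    {v : S × Q × Set (S × Q)} {vs vs' : ℕ → S × Q × Set (S × Q)} {a a' : ℕ → A}
    (h : ConsistentV turn T δ L O π1 π2 v vs a)
    (h' : ConsistentV turn T δ L O π1 π2 v vs' a') :
    a = a' ∧ vs = vs' := by
  obtain ⟨h0, hstep, hp1, hp2⟩ := h
  obtain ⟨h0', hstep', hp1', hp2'⟩ := h'
  have key : ∀ i, a i = a' i ∧ vs i = vs' i := by
    intro i
    induction i using Nat.strong_induction_on with
    | _ i ih =>
      have hstate : vs i = vs' i := by
        cases i with
        | zero => rw [h0, h0']
        | succ j => rw [hstep, hstep', (ih j j.lt_succ_self).1, (ih j j.lt_succ_self).2]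
      have hhist : hist a i = hist a' i := hist_congr fun j hj => (ih j hj).1
      refine ⟨?_, hstate⟩
      cases hturn : turn (vs i).1 with
      | true => rw [hp1 i hturn, hp1' i (hstate ▸ hturn), hhist]
      | false => rw [hp2 i hturn, hp2' i (hstate ▸ hturn), hhist]
  exact ⟨funext fun i => (key i).1, funext fun i => (key i).2⟩

theorem belief_snd_mem_of_mem_Fwin_of_notMem_FO {S Q : Type} {F : Set Q}
    {w : S × Q × Set (S × Q)} (hw : w ∈ Fwin F) (hw' : w ∉ FO F) :
    ∀ p ∈ w.2.2, p.2 ∈ F := by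
  intro p hp
  by_contra hpF
  exact hw' ⟨hw, p, hp, hpF⟩

theorem secret_revealed_outside_opaque_region_general
    {S A Q Ω Γ : Type}
    (turn : S → Bool) (T : S → A → S) (δ : Q → Γ → Q) (L : S → Γ)
    (O : S → A → S → Ω) (F : Set Q)
    (v : S × Q × Set (S × Q))
    (hnotopaque : ¬ ∃ π1 : List A → A, ∀ π2 : List A → A,
        ∀ (vs : ℕ → S × Q × Set (S × Q)) (a : ℕ → A),
        ConsistentV turn T δ L O π1 π2 v vs a → ∃ n, vs n ∈ FO F) :
    ∀ π1 : List A → A,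
      (∀ π2 : List A → A, ∀ (vs : ℕ → S × Q × Set (S × Q)) (a : ℕ → A),
        ConsistentV turn T δ L O π1 π2 v vs a → ∃ n, vs n ∈ Fwin F) →
      ∃ π2 : List A → A, ∀ (vs : ℕ → S × Q × Set (S × Q)) (a : ℕ → A),
        ConsistentV turn T δ L O π1 π2 v vs a →
        ∃ k, (vs k).2.1 ∈ F ∧ ∀ p ∈ (vs k).2.2, p.2 ∈ F := by
  intro π1 hπ1
  push Not at hnotopaque
  obtain ⟨π2, vs, a, hplay, havoid⟩ := hnotopaque π1
  refine ⟨π2, fun vs' a' hplay' => ?_⟩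
  obtain ⟨k, hk⟩ := hπ1 π2 vs a hplay
  rw [(hplay'.unique hplay).2]
  exact ⟨k, hk, belief_snd_mem_of_mem_Fwin_of_notMem_FO hk (havoid k)⟩

/-- if from `v` P1 can surely reach `𝓕` but `v` is not in P1's
sure-winning region for `◊𝓕_O`, then against any P1 strategy that surely
reaches `𝓕` from `v`, P2 has a strategy (a safety strategy avoiding
`Win₁(𝓕_O)`) making every resulting play reach a state whose belief is
contained in `S × F`: the secret is surely revealed when satisfied. -/
theorem secret_revealed_outside_opaque_region
    {S A Q Ω Γ : Type} [Fintype S] [Fintype A] [Fintype Q]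
    (turn : S → Bool) (T : S → A → S) (δ : Q → Γ → Q) (L : S → Γ)
    (O : S → A → S → Ω) (F : Set Q)
    (habs : ∀ q ∈ F, ∀ σ : Γ, δ q σ = q)
    (v : S × Q × Set (S × Q))
    (hwin : ∃ π1 : List A → A, ∀ π2 : List A → A,
        ∀ (vs : ℕ → S × Q × Set (S × Q)) (a : ℕ → A),
        ConsistentV turn T δ L O π1 π2 v vs a → ∃ n, vs n ∈ Fwin F)
    (hnotopaque : ¬ ∃ π1 : List A → A, ∀ π2 : List A → A,
        ∀ (vs : ℕ → S × Q × Set (S × Q)) (a : ℕ → A),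
        ConsistentV turn T δ L O π1 π2 v vs a → ∃ n, vs n ∈ FO F) :
    ∀ π1 : List A → A,
      (∀ π2 : List A → A, ∀ (vs : ℕ → S × Q × Set (S × Q)) (a : ℕ → A),
        ConsistentV turn T δ L O π1 π2 v vs a → ∃ n, vs n ∈ Fwin F) →
      ∃ π2 : List A → A, ∀ (vs : ℕ → S × Q × Set (S × Q)) (a : ℕ → A),
        ConsistentV turn T δ L O π1 π2 v vs a →
        ∃ k, (vs k).2.1 ∈ F ∧ ∀ p ∈ (vs k).2.2, p.2 ∈ F :=
  secret_revealed_outside_opaque_region_general turn T δ L O F v hnotopaque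
end

section
/- Suppose from state v of the belief-augmented game Player 1 can sure-win the reachability objective ◊𝓕 but cannot sure-win ◊𝓕_O (with 𝓕_O ⊆ 𝓕 as defined). Then for every (possibly randomized) Player 1 strategy π_1 that guarantees reaching 𝓕 surely, and Player 2's safety strategy π_2 avoiding Win_1(𝓕_O), the probability that the induced play is opacity-enforcing winning is zero; hence Player 1 has no winning and positive opacity-enforcing strategy from v. -/
/-- An infinite play `(vs, a)` of the belief-augmented game from `v`
consistent with the randomized strategies `π1` (on P1's turns) and `π2`
(on P2's turns): every action taken lies in the support of the distribution
prescribed by the acting player's strategy on the current history. -/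
def RConsistentV {S A Q Ω Γ : Type} (turn : S → Bool) (T : S → A → S)
    (δ : Q → Γ → Q) (L : S → Γ) (O : S → A → S → Ω)
    (π1 π2 : List A → PMF A) (v : S × Q × Set (S × Q))
    (vs : ℕ → S × Q × Set (S × Q)) (a : ℕ → A) : Prop :=
  vs 0 = v ∧ (∀ i, vs (i + 1) = Δb T δ L O (vs i) (a i)) ∧
  (∀ i, turn (vs i).1 = true → a i ∈ (π1 (hist a i)).support) ∧
  (∀ i, turn (vs i).1 = false → a i ∈ (π2 (hist a i)).support)

/-!
Let `W` be the set of states from which Player 1 can surely reach `𝓕_O`. It contains `𝓕_O`, it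
contains every Player-1 state with a move into `W`, and every Player-2 state all of whose moves
lead into `W`. Hence outside `W` Player 2 always has a move that stays outside `W`, and always
playing such a move keeps every play from `v ∉ W` out of `W ⊇ 𝓕_O`, whatever Player 1 does. In
particular no play against this Player-2 strategy is opaque, so no Player-1 strategy can give
opaque plays positive probability.
-/

section SureWinRegion

variable {S A Q Ω Γ : Type} (turn : S → Bool) (T : S → A → S) (δ : Q → Γ → Q) (L : S → Γ)
  (O : S → A → S → Ω)

lemma hist_succ (a : ℕ → A) (i : ℕ) : hist a (i + 1) = a 0 :: hist (fun j => a (j + 1)) i := by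
  simp [hist, List.ofFn_succ]

lemma hist_succ' (a : ℕ → A) (i : ℕ) : hist a (i + 1) = hist a i ++ [a i] := by
  simp only [hist, List.ofFn_succ', List.concat_eq_append, Fin.val_castSucc, Fin.val_last]

variable {turn T δ L O} in
lemma RConsistentV.tail {π1 π2 : List A → PMF A} {u : S × Q × Set (S × Q)}
    {vs : ℕ → S × Q × Set (S × Q)} {a : ℕ → A} (h : RConsistentV turn T δ L O π1 π2 u vs a) :
    RConsistentV turn T δ L O (fun l => π1 (a 0 :: l)) (fun l => π2 (a 0 :: l))
      (vs 1) (fun i => vs (i + 1)) (fun i => a (i + 1)) := by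
  obtain ⟨-, hstep, h1, h2⟩ := h
  refine ⟨rfl, fun i => hstep (i + 1), fun i ht => ?_, fun i ht => ?_⟩
  · simpa only [hist_succ] using h1 (i + 1) ht
  · simpa only [hist_succ] using h2 (i + 1) ht

variable {turn T δ L O} in
lemma RConsistentV.eq_foldl {π1 π2 : List A → PMF A} {u : S × Q × Set (S × Q)}
    {vs : ℕ → S × Q × Set (S × Q)} {a : ℕ → A} (h : RConsistentV turn T δ L O π1 π2 u vs a)
    (n : ℕ) : vs n = (hist a n).foldl (Δb T δ L O) u := by
  induction n with
  | zero => simpa [hist] using h.1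
  | succ n ih => rw [hist_succ', List.foldl_append, h.2.1 n, ih, List.foldl_cons, List.foldl_nil]

def sureWinRegion (X : Set (S × Q × Set (S × Q))) : Set (S × Q × Set (S × Q)) :=
  {u | ∃ π1 : List A → PMF A, ∀ π2 : List A → PMF A,
    ∀ (vs : ℕ → S × Q × Set (S × Q)) (a : ℕ → A),
    RConsistentV turn T δ L O π1 π2 u vs a → ∃ n, vs n ∈ X}

variable {X : Set (S × Q × Set (S × Q))}

lemma subset_sureWinRegion [Nonempty A] : X ⊆ sureWinRegion turn T δ L O X :=
  fun _ hu => ⟨fun _ => PMF.pure (Classical.arbitrary A), fun _ _ _ h => ⟨0, h.1 ▸ hu⟩⟩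

lemma mem_sureWinRegion_of_step {u : S × Q × Set (S × Q)} {a₀ : A} (ht : turn u.1 = true)
    (hW : Δb T δ L O u a₀ ∈ sureWinRegion turn T δ L O X) :
    u ∈ sureWinRegion turn T δ L O X := by
  obtain ⟨π1, hπ1⟩ := hW
  refine ⟨fun l => match l with | [] => PMF.pure a₀ | _ :: t => π1 t, fun π2 vs a h => ?_⟩
  have ha₀ : a 0 = a₀ := by
    simpa [hist] using h.2.2.1 0 (h.1 ▸ ht)
  have hv₁ : vs 1 = Δb T δ L O u a₀ := by rw [h.2.1 0, h.1, ha₀]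
  have htail := h.tail
  rw [ha₀, hv₁] at htail
  obtain ⟨n, hn⟩ := hπ1 _ _ _ htail
  exact ⟨n + 1, hn⟩

lemma mem_sureWinRegion_of_forall_step [Nonempty A] {u : S × Q × Set (S × Q)}
    (hW : ∀ a₀ : A, Δb T δ L O u a₀ ∈ sureWinRegion turn T δ L O X) :
    u ∈ sureWinRegion turn T δ L O X := by
  choose π1 hπ1 using hW
  refine ⟨fun l => match l with
    | [] => PMF.pure (Classical.arbitrary A)
    | a₀ :: t => π1 a₀ t, fun π2 vs a h => ?_⟩
  have htail := h.tail
  rw [h.2.1 0, h.1] at htail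
  obtain ⟨n, hn⟩ := hπ1 (a 0) _ _ _ htail
  exact ⟨n + 1, hn⟩

/-- Histories are action sequences, so the current state is recovered by folding `Δb` from `v`. -/
noncomputable def avoidStrategy [Nonempty A] (X : Set (S × Q × Set (S × Q)))
    (v : S × Q × Set (S × Q)) (l : List A) : PMF A :=
  PMF.pure <| Classical.epsilon fun a₀ =>
    Δb T δ L O (l.foldl (Δb T δ L O) v) a₀ ∉ sureWinRegion turn T δ L O X

lemma notMem_sureWinRegion_of_avoidStrategy [Nonempty A] {v : S × Q × Set (S × Q)}
    (hv : v ∉ sureWinRegion turn T δ L O X) {π1 : List A → PMF A}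
    {vs : ℕ → S × Q × Set (S × Q)} {a : ℕ → A}
    (h : RConsistentV turn T δ L O π1 (avoidStrategy turn T δ L O X v) v vs a) (n : ℕ) :
    vs n ∉ sureWinRegion turn T δ L O X := by
  induction n with
  | zero => exact h.1 ▸ hv
  | succ n ih =>
    rw [h.2.1 n]
    cases ht : turn (vs n).1 with
    | true => exact fun hW => ih (mem_sureWinRegion_of_step turn T δ L O ht hW)
    | false =>
      have hsafe : ∃ a₀, Δb T δ L O (vs n) a₀ ∉ sureWinRegion turn T δ L O X := by
        by_contra! hall
        exact ih (mem_sureWinRegion_of_forall_step turn T δ L O hall)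
      have han := h.2.2.2 n ht
      rw [avoidStrategy, PMF.support_pure, Set.mem_singleton_iff, ← h.eq_foldl n] at han
      exact han ▸ Classical.epsilon_spec hsafe

lemma exists_strategy_avoiding [Nonempty A] {v : S × Q × Set (S × Q)}
    (hv : v ∉ sureWinRegion turn T δ L O X) :
    ∃ π2 : List A → PMF A, ∀ (π1 : List A → PMF A) (vs : ℕ → S × Q × Set (S × Q)) (a : ℕ → A),
      RConsistentV turn T δ L O π1 π2 v vs a → ∀ n, vs n ∉ X :=
  ⟨avoidStrategy turn T δ L O X v, fun _ _ _ h n hn =>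
    notMem_sureWinRegion_of_avoidStrategy turn T δ L O hv h n (subset_sureWinRegion _ _ _ _ _ hn)⟩

end SureWinRegion

theorem no_positive_opacity_enforcing_strategy_general
    {S A Q Ω Γ : Type}
    (turn : S → Bool) (T : S → A → S) (δ : Q → Γ → Q) (L : S → Γ)
    (O : S → A → S → Ω) (F : Set Q)
    (v : S × Q × Set (S × Q))
    (hnotopaque : ¬ ∃ π1 : List A → PMF A, ∀ π2 : List A → PMF A,
        ∀ (vs : ℕ → S × Q × Set (S × Q)) (a : ℕ → A),
        RConsistentV turn T δ L O π1 π2 v vs a → ∃ n, vs n ∈ FO F) :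
    (∀ π1 : List A → PMF A,
      (∀ π2 : List A → PMF A, ∀ (vs : ℕ → S × Q × Set (S × Q)) (a : ℕ → A),
        RConsistentV turn T δ L O π1 π2 v vs a → ∃ n, vs n ∈ Fwin F) →
      ∃ π2 : List A → PMF A, ∀ (vs : ℕ → S × Q × Set (S × Q)) (a : ℕ → A),
        RConsistentV turn T δ L O π1 π2 v vs a → ∀ n, vs n ∉ FO F) ∧
    ¬ ∃ π1 : List A → PMF A,
      (∀ π2 : List A → PMF A, ∀ (vs : ℕ → S × Q × Set (S × Q)) (a : ℕ → A),
        RConsistentV turn T δ L O π1 π2 v vs a → ∃ n, vs n ∈ Fwin F) ∧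
      (∀ π2 : List A → PMF A,
        (∃ (vs : ℕ → S × Q × Set (S × Q)) (a : ℕ → A),
          RConsistentV turn T δ L O π1 π2 v vs a ∧
          ∃ n, vs n ∈ FO F ∧ ∀ m < n, vs m ∉ Fwin F) ∧
        (∃ (vs : ℕ → S × Q × Set (S × Q)) (a : ℕ → A),
          RConsistentV turn T δ L O π1 π2 v vs a ∧
          ∃ n, vs n ∈ Fwin F ∧ vs n ∉ FO F ∧ ∀ m < n, vs m ∉ Fwin F)) := by
  have avoid : ∀ π1 : List A → PMF A, ∃ π2 : List A → PMF A,
      ∀ (vs : ℕ → S × Q × Set (S × Q)) (a : ℕ → A),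
        RConsistentV turn T δ L O π1 π2 v vs a → ∀ n, vs n ∉ FO F := by
    intro π1
    have : Nonempty A := ⟨(π1 []).support_nonempty.some⟩
    obtain ⟨π2, hπ2⟩ := exists_strategy_avoiding turn T δ L O hnotopaque
    exact ⟨π2, hπ2 π1⟩
  refine ⟨fun π1 _ => avoid π1, ?_⟩
  rintro ⟨π1, -, hpos⟩
  obtain ⟨π2, hπ2⟩ := avoid π1
  obtain ⟨⟨vs, a, h, n, hn, -⟩, -⟩ := hpos π2
  exact hπ2 vs a h n hn

/-- suppose from `v` P1 can surely reach `𝓕` but cannot surely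
reach `𝓕_O` (even with randomized strategies).  Then (i) for every randomized
P1 strategy that surely reaches `𝓕`, P2 has a strategy under which no induced
play ever visits `𝓕_O` — the probability of an opacity-enforcing winning play
is zero; and (ii) P1 has no winning and positive opacity-enforcing strategy
from `v`: no strategy that surely reaches `𝓕` and, against every P2 strategy,
gives positive probability both to plays whose first visit to `𝓕` is in
`𝓕_O` (opaque) and to plays whose first visit to `𝓕` is in `𝓕 \ 𝓕_O`
(revealing). -/
theorem no_positive_opacity_enforcing_strategy
    {S A Q Ω Γ : Type} [Fintype S] [Fintype A] [Fintype Q]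
    (turn : S → Bool) (T : S → A → S) (δ : Q → Γ → Q) (L : S → Γ)
    (O : S → A → S → Ω) (F : Set Q)
    (habs : ∀ q ∈ F, ∀ σ : Γ, δ q σ = q)
    (v : S × Q × Set (S × Q))
    (hwin : ∃ π1 : List A → PMF A, ∀ π2 : List A → PMF A,
        ∀ (vs : ℕ → S × Q × Set (S × Q)) (a : ℕ → A),
        RConsistentV turn T δ L O π1 π2 v vs a → ∃ n, vs n ∈ Fwin F)
    (hnotopaque : ¬ ∃ π1 : List A → PMF A, ∀ π2 : List A → PMF A,
        ∀ (vs : ℕ → S × Q × Set (S × Q)) (a : ℕ → A),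
        RConsistentV turn T δ L O π1 π2 v vs a → ∃ n, vs n ∈ FO F) :
    (∀ π1 : List A → PMF A,
      (∀ π2 : List A → PMF A, ∀ (vs : ℕ → S × Q × Set (S × Q)) (a : ℕ → A),
        RConsistentV turn T δ L O π1 π2 v vs a → ∃ n, vs n ∈ Fwin F) →
      ∃ π2 : List A → PMF A, ∀ (vs : ℕ → S × Q × Set (S × Q)) (a : ℕ → A),
        RConsistentV turn T δ L O π1 π2 v vs a → ∀ n, vs n ∉ FO F) ∧
    ¬ ∃ π1 : List A → PMF A,
      (∀ π2 : List A → PMF A, ∀ (vs : ℕ → S × Q × Set (S × Q)) (a : ℕ → A),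
        RConsistentV turn T δ L O π1 π2 v vs a → ∃ n, vs n ∈ Fwin F) ∧
      (∀ π2 : List A → PMF A,
        (∃ (vs : ℕ → S × Q × Set (S × Q)) (a : ℕ → A),
          RConsistentV turn T δ L O π1 π2 v vs a ∧
          ∃ n, vs n ∈ FO F ∧ ∀ m < n, vs m ∉ Fwin F) ∧
        (∃ (vs : ℕ → S × Q × Set (S × Q)) (a : ℕ → A),
          RConsistentV turn T δ L O π1 π2 v vs a ∧
          ∃ n, vs n ∈ Fwin F ∧ vs n ∉ FO F ∧ ∀ m < n, vs m ∉ Fwin F)) :=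
  no_positive_opacity_enforcing_strategy_general turn T δ L O F v hnotopaque
end
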